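/- (Minimal valuation) Let A be a finite set of regular box-formulas, V = {x_1, …, x_n} a set of individual variables, f : V → P(A), F = (W, (R_λ)) a Kripke frame and g : V → W an assignment of points. Then among all valuations θ such that F, g(x_j), θ ⊨ φ for every j and every φ ∈ f(x_j), there is a smallest one θ_min (smallest in the sense that θ_min(p) ⊆ θ(p) for every such θ and every variable p), and θ_min(p^k_i) equals the denotation of the L-expression KF_f^{p^k_i} in F under the assignment g. -/
import Mathlib

set_option autoImplicit true

universe u v w

/-- Modal formulas over modality indices `Λ` and propositional variables `V`. -/
inductive MF (Λ : Type u) (V : Type v) : Type (max u v)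
  | var : V → MF Λ V
  | top : MF Λ V
  | bot : MF Λ V
  | and : MF Λ V → MF Λ V → MF Λ V
  | or  : MF Λ V → MF Λ V → MF Λ V
  | neg : MF Λ V → MF Λ V
  | imp : MF Λ V → MF Λ V → MF Λ V
  | dia : Λ → MF Λ V → MF Λ V
  | box : Λ → MF Λ V → MF Λ V

namespace MF
variable {Λ : Type u} {V : Type v}

/-- The set of propositional variables occurring in a modal formula. -/
def vars : MF Λ V → Set V
  | var p => {p}
  | top => ∅
  | bot => ∅
  | and a b => vars a ∪ vars b
  | or a b => vars a ∪ vars b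
  | neg a => vars a
  | imp a b => vars a ∪ vars b
  | dia _ a => vars a
  | box _ a => vars a

end MF

/-- Positive modal formulas: built without `¬` and `→`. -/
inductive Positive {Λ : Type u} {V : Type v} : MF Λ V → Prop
  | var (p : V) : Positive (.var p)
  | top : Positive .top
  | bot : Positive .bot
  | and {a b} : Positive a → Positive b → Positive (.and a b)
  | or {a b} : Positive a → Positive b → Positive (.or a b)
  | dia (l) {a} : Positive a → Positive (.dia l a)
  | box (l) {a} : Positive a → Positive (.box l a)

/-- A Kripke frame with accessibility relations indexed by `Λ`. -/
structure Frame (Λ : Type u) where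
  W : Type w
  R : Λ → W → W → Prop

/-- Kripke satisfaction `F, x, θ ⊨ φ`. -/
def sat {Λ : Type u} {V : Type v} (F : Frame Λ) (θ : V → Set F.W) : F.W → MF Λ V → Prop
  | x, .var p => x ∈ θ p
  | _, .top => True
  | _, .bot => False
  | x, .and a b => sat F θ x a ∧ sat F θ x b
  | x, .or a b => sat F θ x a ∨ sat F θ x b
  | x, .neg a => ¬ sat F θ x a
  | x, .imp a b => sat F θ x a → sat F θ x b
  | x, .dia l a => ∃ y, F.R l x y ∧ sat F θ y a
  | x, .box l a => ∀ y, F.R l x y → sat F θ y a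

/-- `BoxF φ p S`: `φ` is a box-formula with head `p`, in which the set of variables
occurring not as the head is `S`. -/
inductive BoxF {Λ : Type u} {V : Type v} : MF Λ V → V → Set V → Prop
  | var (p : V) : BoxF (.var p) p ∅
  | imp {POS ψ p S} : Positive POS → BoxF ψ p S → BoxF (.imp POS ψ) p (MF.vars POS ∪ S)
  | box (l) {ψ p S} : BoxF ψ p S → BoxF (.box l ψ) p S

/-- `RegBF r φ p`: relative to the rank assignment `r`, `φ` is a regular box-formula
with head `p` (of rank `r p`): all variables of the positive antecedents have rank `< r p`. -/
inductive RegBF {Λ : Type u} {V : Type v} (r : V → ℕ) : MF Λ V → V → Prop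
  | var (p : V) : RegBF r (.var p) p
  | imp {POS ψ p} : Positive POS → (∀ q ∈ MF.vars POS, r q < r p) →
      RegBF r ψ p → RegBF r (.imp POS ψ) p
  | box (l) {ψ p} : RegBF r ψ p → RegBF r (.box l ψ) p

/-- The edge relation of the dependency graph of a set `A` of box-formulas:
`p → q` iff `p` occurs (not as the head) in some member of `A` with head `q`. -/
def depEdge {Λ : Type u} {V : Type v} (A : Set (MF Λ V)) (p q : V) : Prop :=
  ∃ φ ∈ A, ∃ S, BoxF φ q S ∧ p ∈ S

/-- A set of box-formulas is regular if its dependency graph has no oriented cycle. -/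
def RegularSet {Λ : Type u} {V : Type v} (A : Set (MF Λ V)) : Prop :=
  ∀ p : V, ¬ Relation.TransGen (depEdge A) p p

/-- `R_λ^{-1}(A) = {u : ∃ v, u R_λ v ∧ v ∈ A}`. -/
def Rinv {Λ : Type u} (F : Frame Λ) (l : Λ) (A : Set F.W) : Set F.W :=
  {u | ∃ v, F.R l u v ∧ v ∈ A}

/-- `R_λ^□(A) = {u : ∀ v, u R_λ v → v ∈ A}`. -/
def RboxOp {Λ : Type u} (F : Frame Λ) (l : Λ) (A : Set F.W) : Set F.W :=
  {u | ∀ v, F.R l u v → v ∈ A}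

/-- `R_λ(A) = {u : ∃ v, v R_λ u ∧ v ∈ A}`. -/
def Rfwd {Λ : Type u} (F : Frame Λ) (l : Λ) (A : Set F.W) : Set F.W :=
  {u | ∃ v, F.R l v u ∧ v ∈ A}

/-- The interpretation of the expression `KP^{POS}` in a frame `F`, the set variables
`P^l_i` being interpreted by `P`.  (Junk value `∅` on non-positive constructors.) -/
def KPsem {Λ : Type u} (F : Frame Λ) (P : ℕ × ℕ → Set F.W) : MF Λ (ℕ × ℕ) → Set F.W
  | .var q => P q
  | .top => Set.univ
  | .bot => ∅
  | .and a b => KPsem F P a ∩ KPsem F P b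
  | .or a b => KPsem F P a ∪ KPsem F P b
  | .dia l a => Rinv F l (KPsem F P a)
  | .box l a => RboxOp F l (KPsem F P a)
  | .neg _ => ∅
  | .imp _ _ => ∅

/-- The interpretation of the expression `KV^φ` in a frame `F`: the set variables `P^l_i`
are interpreted by `P` and the extra variable `#` by the second argument.
(Junk value `∅` on constructors that do not occur in regular box-formulas.) -/
def KVsem {Λ : Type u} (F : Frame Λ) (P : ℕ × ℕ → Set F.W) : MF Λ (ℕ × ℕ) → Set F.W → Set F.W
  | .var _, X => X
  | .imp POS ψ, X => KVsem F P ψ (X ∩ KPsem F P POS)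
  | .box l ψ, X => KVsem F P ψ (Rfwd F l X)
  | _, _ => ∅

/-- The semantic minimal valuation: given points `g j` and sets `f j` of regular
box-formulas to be verified at `g j`, `thetaMinSem F g f k i` is the minimal value of the
variable `p^k_i`; it is defined by recursion on the rank `k` as the union, over all `j` and
all `φ ∈ f j` with head `p^k_i`, of `KV^φ(g j)` computed with the minimal values of the
variables of lower rank. -/
noncomputable def thetaMinSem {Λ : Type u} (F : Frame Λ) {ι : Type w} (g : ι → F.W)
    (f : ι → Set (MF Λ (ℕ × ℕ))) : ℕ → ℕ → Set F.W :=
  fun k => Nat.strongRecOn (motive := fun _ => ℕ → Set F.W) k fun k ih i =>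
    ⋃ (j : ι), ⋃ φ ∈ f j, ⋃ (_ : RegBF Prod.fst φ (k, i)),
      KVsem F (fun q => if h : q.1 < k then ih q.1 h q.2 else ∅) φ {g j}

/-- `L`-expressions: terms of the language `L` with individual variables `x_i` (`i : ℕ`),
constants `⊤, ⊥`, unary `R_λ^{-1}`, `R_λ^□`, `R_λ` and binary `∩`, `∪`. -/
inductive LExp (Λ : Type u) : Type u
  | var : ℕ → LExp Λ
  | top : LExp Λ
  | bot : LExp Λ
  | inter : LExp Λ → LExp Λ → LExp Λ
  | union : LExp Λ → LExp Λ → LExp Λ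
  | rinv : Λ → LExp Λ → LExp Λ
  | rbox : Λ → LExp Λ → LExp Λ
  | rfw : Λ → LExp Λ → LExp Λ

namespace LExp
variable {Λ : Type u}

/-- Denotation of an `L`-expression in a frame `F`, the variable `x_i` denoting the
singleton of the point `g i`. -/
def den (F : Frame Λ) (g : ℕ → F.W) : LExp Λ → Set F.W
  | var i => {g i}
  | top => Set.univ
  | bot => ∅
  | inter a b => den F g a ∩ den F g b
  | union a b => den F g a ∪ den F g b
  | rinv l a => Rinv F l (den F g a)
  | rbox l a => RboxOp F l (den F g a)
  | rfw l a => Rfwd F l (den F g a)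

/-- The set of (indices of) individual variables occurring in an `L`-expression. -/
def evars : LExp Λ → Set ℕ
  | var i => {i}
  | top => ∅
  | bot => ∅
  | inter a b => evars a ∪ evars b
  | union a b => evars a ∪ evars b
  | rinv _ a => evars a
  | rbox _ a => evars a
  | rfw _ a => evars a

end LExp

/-- The subexpression relation on `L`-expressions. -/
inductive Subexp {Λ : Type u} : LExp Λ → LExp Λ → Prop
  | refl (e : LExp Λ) : Subexp e e
  | interL {e a b} : Subexp e a → Subexp e (.inter a b)
  | interR {e a b} : Subexp e b → Subexp e (.inter a b)
  | unionL {e a b} : Subexp e a → Subexp e (.union a b)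
  | unionR {e a b} : Subexp e b → Subexp e (.union a b)
  | rinv (l) {e a} : Subexp e a → Subexp e (.rinv l a)
  | rbox (l) {e a} : Subexp e a → Subexp e (.rbox l a)
  | rfw (l) {e a} : Subexp e a → Subexp e (.rfw l a)

/-- `SafeFor e`: `e` is "safe for" the ambient expression, i.e. `e` is a variable, or
`R_λ(e')` with `e'` safe for it, or an intersection one of whose components is safe for it. -/
inductive SafeFor {Λ : Type u} : LExp Λ → Prop
  | var (i : ℕ) : SafeFor (.var i)
  | rfw (l) {a} : SafeFor a → SafeFor (.rfw l a)
  | interL {a b} : SafeFor a → SafeFor (.inter a b)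
  | interR {a b} : SafeFor b → SafeFor (.inter a b)

/-- An `L`-expression is safe if it is safe for itself and the argument of every
subexpression of the form `R_λ(ψ)` is safe for it. -/
def Safe {Λ : Type u} (e : LExp Λ) : Prop :=
  SafeFor e ∧ ∀ l a, Subexp (.rfw l a) e → SafeFor a

mutual
  /-- The class `K`: the least class of `L`-expressions containing the variables and closed
  under `S ↦ R_λ(S)` and `S ↦ S ∩ E` for `E` a positive combination of members of `K`. -/
  inductive InK {Λ : Type u} : LExp Λ → Prop
    | var (i : ℕ) : InK (.var i)
    | rfw (l : Λ) {S : LExp Λ} : InK S → InK (.rfw l S)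
    | inter {S E : LExp Λ} : InK S → PosOfK E → InK (.inter S E)
  /-- Positive combinations of members of `K`: built from members of `K` using only
  `∩`, `∪`, `R_λ^{-1}`, `R_λ^□`, `⊤`, `⊥`. -/
  inductive PosOfK {Λ : Type u} : LExp Λ → Prop
    | ofK {e : LExp Λ} : InK e → PosOfK e
    | top : PosOfK .top
    | bot : PosOfK .bot
    | inter {a b} : PosOfK a → PosOfK b → PosOfK (.inter a b)
    | union {a b} : PosOfK a → PosOfK b → PosOfK (.union a b)
    | rinv (l) {a} : PosOfK a → PosOfK (.rinv l a)
    | rbox (l) {a} : PosOfK a → PosOfK (.rbox l a)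
end

/-- Quasi-safe `L`-expressions: positive combinations of safe expressions, i.e. built from
safe expressions using only `∩`, `∪`, `R_λ^{-1}`, `R_λ^□`, `⊤`, `⊥`. -/
inductive QuasiSafe {Λ : Type u} : LExp Λ → Prop
  | safe {e : LExp Λ} : Safe e → QuasiSafe e
  | top : QuasiSafe .top
  | bot : QuasiSafe .bot
  | inter {a b} : QuasiSafe a → QuasiSafe b → QuasiSafe (.inter a b)
  | union {a b} : QuasiSafe a → QuasiSafe b → QuasiSafe (.union a b)
  | rinv (l) {a} : QuasiSafe a → QuasiSafe (.rinv l a)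
  | rbox (l) {a} : QuasiSafe a → QuasiSafe (.rbox l a)

/-- `ReplOne i ψ φ φ'`: `φ'` is the result of replacing one occurrence of the variable
`x_i` in `φ` by `ψ`. -/
inductive ReplOne {Λ : Type u} (i : ℕ) (ψ : LExp Λ) : LExp Λ → LExp Λ → Prop
  | here : ReplOne i ψ (.var i) ψ
  | interL {a a' b} : ReplOne i ψ a a' → ReplOne i ψ (.inter a b) (.inter a' b)
  | interR {a b b'} : ReplOne i ψ b b' → ReplOne i ψ (.inter a b) (.inter a b')
  | unionL {a a' b} : ReplOne i ψ a a' → ReplOne i ψ (.union a b) (.union a' b)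
  | unionR {a b b'} : ReplOne i ψ b b' → ReplOne i ψ (.union a b) (.union a b')
  | rinv (l) {a a'} : ReplOne i ψ a a' → ReplOne i ψ (.rinv l a) (.rinv l a')
  | rbox (l) {a a'} : ReplOne i ψ a a' → ReplOne i ψ (.rbox l a) (.rbox l a')
  | rfw (l) {a a'} : ReplOne i ψ a a' → ReplOne i ψ (.rfw l a) (.rfw l a')

/-- A finite union of `L`-expressions (empty union is `⊥`). -/
def unionList {Λ : Type u} : List (LExp Λ) → LExp Λ
  | [] => .bot
  | e :: es => .union e (unionList es)

/-- `UnionOfSafe e`: `e` is a finite union of safe expressions. -/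
inductive UnionOfSafe {Λ : Type u} : LExp Λ → Prop
  | bot : UnionOfSafe .bot
  | safe {e : LExp Λ} : Safe e → UnionOfSafe e
  | union {a b} : UnionOfSafe a → UnionOfSafe b → UnionOfSafe (.union a b)

/-- Syntactic `KP^{POS}`: the `L`-expression obtained from the positive formula `POS` by
replacing each set variable `P^l_i` by the `L`-expression `KF (l, i)`.
(Junk value on non-positive constructors.) -/
def KPsub {Λ : Type u} (KF : ℕ × ℕ → LExp Λ) : MF Λ (ℕ × ℕ) → LExp Λ
  | .var q => KF q
  | .top => .top
  | .bot => .bot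
  | .and a b => .inter (KPsub KF a) (KPsub KF b)
  | .or a b => .union (KPsub KF a) (KPsub KF b)
  | .dia l a => .rinv l (KPsub KF a)
  | .box l a => .rbox l (KPsub KF a)
  | .neg _ => .bot
  | .imp _ _ => .bot

/-- Syntactic `KVF^φ(t)`: the `L`-expression obtained from `KV^φ` by substituting the
`L`-expression `t` for `#` and `KF (l, i)` for each set variable `P^l_i`.
(Junk value on constructors that do not occur in regular box-formulas.) -/
def KVFsyn {Λ : Type u} (KF : ℕ × ℕ → LExp Λ) : MF Λ (ℕ × ℕ) → LExp Λ → LExp Λ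
  | .var _, t => t
  | .imp POS ψ, t => KVFsyn KF ψ (.inter t (KPsub KF POS))
  | .box l ψ, t => KVFsyn KF ψ (.rfw l t)
  | _, _ => .bot

open scoped Classical in
/-- The syntactic minimal valuation `KF_f^{p^k_i}` for variables `x_0, …, x_{n-1}` and
`f` assigning to each variable a finite set of regular box-formulas: defined by recursion on
the rank `k` as the union, over all `j < n` and all `φ ∈ f j` with head `p^k_i`, of
`KVF_f^φ(x_j)`, which is `KV^φ` with `x_j` substituted for `#` and `KF_f^{p^l_m}`
substituted for each `P^l_m` with `l < k`. -/
noncomputable def KFsyn {Λ : Type u} (n : ℕ) (f : ℕ → Finset (MF Λ (ℕ × ℕ))) :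
    ℕ → ℕ → LExp Λ :=
  fun k => Nat.strongRecOn (motive := fun _ => ℕ → LExp Λ) k fun k ih i =>
    unionList (((List.range n).flatMap fun j =>
      ((f j).toList.filter fun φ => decide (RegBF Prod.fst φ (k, i))).map fun φ =>
        KVFsyn (fun q => if h : q.1 < k then ih q.1 h q.2 else LExp.bot) φ (LExp.var j)))

/-- The expressions substituted for the set variables `P^l_m`, `l < k`, in `KVF`:
the syntactic minimal valuations of the lower ranks. -/
noncomputable def lowKF {Λ : Type u} (n : ℕ) (f : ℕ → Finset (MF Λ (ℕ × ℕ))) (k : ℕ) :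
    ℕ × ℕ → LExp Λ :=
  fun q => if q.1 < k then KFsyn n f q.1 q.2 else LExp.bot

/-- `KVFat n f φ j k` is the `L`-expression `KVF_f^φ(x_j)` for `φ` a regular box-formula
of rank `k`. -/
noncomputable def KVFat {Λ : Type u} (n : ℕ) (f : ℕ → Finset (MF Λ (ℕ × ℕ)))
    (φ : MF Λ (ℕ × ℕ)) (j k : ℕ) : LExp Λ :=
  KVFsyn (lowKF n f k) φ (.var j)

/-- A labelled tree-like structure: a set of vertices with relations indexed by `Λ`,
a root, and a label function assigning to every vertex a set of labels from `α`. -/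
structure LabTree (Λ : Type u) (α : Type v) where
  V : Type
  R : Λ → V → V → Prop
  root : V
  label : V → Set α

/-- Derivation trees witnessing that a formula is built from base formulas using only
`∧` and `◇_λ`. -/
inductive BuiltT (Λ : Type u) (V : Type v) : Type (max u v)
  | base : MF Λ V → BuiltT Λ V
  | and : BuiltT Λ V → BuiltT Λ V → BuiltT Λ V
  | dia : Λ → BuiltT Λ V → BuiltT Λ V

/-- The modal formula described by a derivation tree. -/
def BuiltT.formula {Λ : Type u} {V : Type v} : BuiltT Λ V → MF Λ V
  | base φ => φ
  | and a b => .and a.formula b.formula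
  | dia l a => .dia l a.formula

/-- The derivation tree uses only base formulas from `A`. -/
def BuiltT.Ok {Λ : Type u} {V : Type v} (A : Set (MF Λ V)) : BuiltT Λ V → Prop
  | base φ => φ ∈ A
  | and a b => a.Ok A ∧ b.Ok A
  | dia _ a => a.Ok A

/-- Helper for gluing two labelled trees at their roots: the relation on the disjoint sum,
with the edges out of the second root re-attached to the first root. -/
def glueR {Λ : Type u} {W₁ W₂ : Type} (R₁ : Λ → W₁ → W₁ → Prop) (R₂ : Λ → W₂ → W₂ → Prop)
    (r₁ : W₁) (r₂ : W₂) (l : Λ) : W₁ ⊕ W₂ → W₁ ⊕ W₂ → Prop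
  | Sum.inl a, Sum.inl b => R₁ l a b
  | Sum.inr a, Sum.inr b => R₂ l a b
  | Sum.inl a, Sum.inr b => a = r₁ ∧ R₂ l r₂ b
  | Sum.inr _, Sum.inl _ => False

open Classical in
/-- Helper for gluing two labelled trees at their roots: the label function, the glued root
receiving the union of the two root labels. -/
noncomputable def glueLab {α : Type w} {W₁ W₂ : Type} (L₁ : W₁ → Set α) (L₂ : W₂ → Set α)
    (r₁ : W₁) (r₂ : W₂) : W₁ ⊕ W₂ → Set α
  | Sum.inl a => if a = r₁ then L₁ r₁ ∪ L₂ r₂ else L₁ a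
  | Sum.inr b => L₂ b

/-- Helper for prefixing a labelled tree with a new root: the relation on `Option W`,
with an `R_{l₀}`-edge from the new root `none` to the old root `r`. -/
def prefR {Λ : Type u} {W : Type} (R : Λ → W → W → Prop) (l₀ : Λ) (r : W) (l : Λ) :
    Option W → Option W → Prop
  | none, some w => l = l₀ ∧ w = r
  | some a, some b => R l a b
  | _, _ => False

/-- Helper for prefixing a labelled tree with a new root: the label function, the new root
getting the empty label. -/
def prefLab {α : Type w} {W : Type} (L : W → Set α) : Option W → Set α
  | none => ∅
  | some a => L a

/-- The reduced syntactical tree of a formula built from base formulas using `∧` and `◇_λ`: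
a single root labelled `{a}` for a base formula `a`; for a conjunction, the two trees
with their roots identified (labels united); for `◇_λ ψ`, a new root with empty label and an
`R_λ`-edge to the root of the tree of `ψ`. -/
noncomputable def TreeOf {Λ : Type u} {V : Type v} : BuiltT Λ V → LabTree Λ (MF Λ V)
  | .base φ =>
      { V := Unit, R := fun _ _ _ => False, root := (), label := fun _ => {φ} }
  | .and b₁ b₂ =>
      let T₁ := TreeOf b₁
      let T₂ := TreeOf b₂
      { V := {v : T₁.V ⊕ T₂.V // v ≠ Sum.inr T₂.root},
        R := fun l u v => glueR T₁.R T₂.R T₁.root T₂.root l u.1 v.1,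
        root := ⟨Sum.inl T₁.root, by exact Sum.inl_ne_inr⟩,
        label := fun v => glueLab T₁.label T₂.label T₁.root T₂.root v.1 }
  | .dia l b =>
      let T := TreeOf b
      { V := Option T.V,
        R := fun l' u v => prefR T.R l T.root l' u v,
        root := none,
        label := fun v => prefLab T.label v }

/-- Restrictedly positive first-order formulas over the frame language: built from atoms
`y ∈ E` (`E` an `L`-expression) using `∧`, `∨` and the restricted quantifiers
`(∀ y ◁_λ x)` and `(∃ y ◁_λ x)`. -/
inductive KrF (Λ : Type u) : Type u
  | atom : ℕ → LExp Λ → KrF Λ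
  | and : KrF Λ → KrF Λ → KrF Λ
  | or : KrF Λ → KrF Λ → KrF Λ
  | all : ℕ → Λ → ℕ → KrF Λ → KrF Λ
  | ex : ℕ → Λ → ℕ → KrF Λ → KrF Λ

namespace KrF
variable {Λ : Type u}

/-- Truth of a restrictedly positive formula in a frame under an assignment `g` of points to
individual variables; the atom `y ∈ E` is read via the `#`-translation, i.e. as membership
of `g y` in the denotation of `E`. -/
def holds (F : Frame Λ) : (ℕ → F.W) → KrF Λ → Prop
  | g, atom y E => g y ∈ E.den F g
  | g, and a b => holds F g a ∧ holds F g b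
  | g, or a b => holds F g a ∨ holds F g b
  | g, all y l x β => ∀ w, F.R l (g x) w → holds F (Function.update g y w) β
  | g, ex y l x β => ∃ w, F.R l (g x) w ∧ holds F (Function.update g y w) β

/-- Free variables. -/
def fv : KrF Λ → Set ℕ
  | atom y E => insert y E.evars
  | and a b => fv a ∪ fv b
  | or a b => fv a ∪ fv b
  | all y _ x β => insert x (fv β \ {y})
  | ex y _ x β => insert x (fv β \ {y})

/-- Bound variables. -/
def bv : KrF Λ → Set ℕ
  | atom _ _ => ∅
  | and a b => bv a ∪ bv b
  | or a b => bv a ∪ bv b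
  | all y _ _ β => insert y (bv β)
  | ex y _ _ β => insert y (bv β)

/-- No two distinct quantifier occurrences bind the same variable. -/
def CleanBound : KrF Λ → Prop
  | atom _ _ => True
  | and a b => CleanBound a ∧ CleanBound b ∧ bv a ∩ bv b = ∅
  | or a b => CleanBound a ∧ CleanBound b ∧ bv a ∩ bv b = ∅
  | all y _ _ β => CleanBound β ∧ y ∉ bv β
  | ex y _ _ β => CleanBound β ∧ y ∉ bv β

/-- Clean formulas: no variable occurs both free and bound, and no two distinct quantifier
occurrences bind the same variable. -/
def Clean (φ : KrF Λ) : Prop := fv φ ∩ bv φ = ∅ ∧ CleanBound φ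

/-- All the `L`-expressions occurring in atoms of the formula satisfy `P`. -/
def AtomsAll (P : LExp Λ → Prop) : KrF Λ → Prop
  | atom _ E => P E
  | and a b => AtomsAll P a ∧ AtomsAll P b
  | or a b => AtomsAll P a ∧ AtomsAll P b
  | all _ _ _ β => AtomsAll P β
  | ex _ _ _ β => AtomsAll P β

/-- Quantifier-free formulas (built from atoms using only `∧` and `∨`). -/
def QFree : KrF Λ → Prop
  | atom _ _ => True
  | and a b => QFree a ∧ QFree b
  | or a b => QFree a ∧ QFree b
  | all _ _ _ _ => False
  | ex _ _ _ _ => False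

/-- Formulas built from atoms using only `∧`, `∨` and restricted universal quantification
(no existential quantifier). -/
def NoEx : KrF Λ → Prop
  | atom _ _ => True
  | and a b => NoEx a ∧ NoEx b
  | or a b => NoEx a ∧ NoEx b
  | all _ _ _ β => NoEx β
  | ex _ _ _ _ => False

/-- `GKok U e φ`: every variable occurring in an `L`-expression of an atom of `φ` is
inherently universal. Here `U` is the set of variables that are inherently universal so far
(initially the free variables) and `e` records whether we are within the scope of an
existential quantifier. -/
def GKok : Set ℕ → Bool → KrF Λ → Prop
  | U, _, atom _ E => E.evars ⊆ U
  | U, e, and a b => GKok U e a ∧ GKok U e b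
  | U, e, or a b => GKok U e a ∧ GKok U e b
  | U, false, all y _ _ β => GKok (insert y U) false β
  | U, true, all _ _ _ β => GKok U true β
  | U, _, ex _ _ _ β => GKok U true β

end KrF

/-- A generalized Kracht formula with free variables: clean, restrictedly positive with safe
atoms, and in every atom `y ∈ E` all variables of `E` are inherently universal. -/
def IsGenKrachtFV {Λ : Type u} (α : KrF Λ) : Prop :=
  α.Clean ∧ α.AtomsAll Safe ∧ α.GKok α.fv false

/-- A generalized Kracht formula: a generalized Kracht formula with free variables whose
only free variable is `x0`. -/
def IsGenKracht {Λ : Type u} (α : KrF Λ) (x0 : ℕ) : Prop :=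
  IsGenKrachtFV α ∧ α.fv = {x0}

/-- Generalized Sahlqvist antecedents: built from regular box-formulas and negative
formulas using only `∧`, `∨`, `◇_λ`. -/
inductive GSAnt {Λ : Type u} : MF Λ (ℕ × ℕ) → Prop
  | reg {φ p} : RegBF Prod.fst φ p → GSAnt φ
  | neg {φ} : Positive φ → GSAnt (.neg φ)
  | and {a b} : GSAnt a → GSAnt b → GSAnt (.and a b)
  | or {a b} : GSAnt a → GSAnt b → GSAnt (.or a b)
  | dia (l) {a} : GSAnt a → GSAnt (.dia l a)

/-- Generalized Sahlqvist formulas: built from generalized Sahlqvist implications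
`GSA → ⊥` by applying boxes and conjunctions, and disjunctions only to formulas without
common propositional variables. -/
inductive GSF {Λ : Type u} : MF Λ (ℕ × ℕ) → Prop
  | impl {a} : GSAnt a → GSF (.imp a .bot)
  | box (l) {a} : GSF a → GSF (.box l a)
  | and {a b} : GSF a → GSF b → GSF (.and a b)
  | or {a b} : GSF a → GSF b → MF.vars a ∩ MF.vars b = ∅ → GSF (.or a b)

open Classical in
/-- The modal translation `E^T` of a quasi-safe expression: safe subexpressions are
replaced by their associated propositional variables `p_E`, and `∩, ∪, R^{-1}_λ, R^□_λ`
become `∧, ∨, ◇_λ, □_λ`. -/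
noncomputable def Etrans {Λ : Type u} (pE : LExp Λ → ℕ × ℕ) : LExp Λ → MF Λ (ℕ × ℕ)
  | .var i => .var (pE (.var i))
  | .top => .top
  | .bot => .bot
  | .inter a b =>
      if Safe (LExp.inter a b) then .var (pE (.inter a b))
      else .and (Etrans pE a) (Etrans pE b)
  | .union a b =>
      if Safe (LExp.union a b) then .var (pE (.union a b))
      else .or (Etrans pE a) (Etrans pE b)
  | .rinv l a =>
      if Safe (LExp.rinv l a) then .var (pE (.rinv l a)) else .dia l (Etrans pE a)
  | .rbox l a =>
      if Safe (LExp.rbox l a) then .var (pE (.rbox l a)) else .box l (Etrans pE a)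
  | .rfw l a => if Safe (LExp.rfw l a) then .var (pE (.rfw l a)) else .bot

/-- A finite disjunction of modal formulas (empty disjunction is `⊥`). -/
def orList {Λ : Type u} {V : Type v} : List (MF Λ V) → MF Λ V
  | [] => .bot
  | a :: as => .or a (orList as)

section Statement5Aux

variable {Λ : Type u} {F : Frame Λ}

lemma Rinv_mono {l : Λ} {A B : Set F.W} (h : A ⊆ B) : Rinv F l A ⊆ Rinv F l B :=
  fun _ ⟨v, hv, hvA⟩ => ⟨v, hv, h hvA⟩

lemma RboxOp_mono {l : Λ} {A B : Set F.W} (h : A ⊆ B) : RboxOp F l A ⊆ RboxOp F l B :=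
  fun _ hu v hv => h (hu v hv)

lemma Rfwd_mono {l : Λ} {A B : Set F.W} (h : A ⊆ B) : Rfwd F l A ⊆ Rfwd F l B :=
  fun _ ⟨v, hv, hvA⟩ => ⟨v, hv, h hvA⟩

lemma KPsem_mono {P P' : ℕ × ℕ → Set F.W} (h : ∀ q, P q ⊆ P' q) :
    ∀ a : MF Λ (ℕ × ℕ), KPsem F P a ⊆ KPsem F P' a
  | .var q => h q
  | .top => subset_rfl
  | .bot => subset_rfl
  | .and a b => Set.inter_subset_inter (KPsem_mono h a) (KPsem_mono h b)
  | .or a b => Set.union_subset_union (KPsem_mono h a) (KPsem_mono h b)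
  | .neg _ => subset_rfl
  | .imp _ _ => subset_rfl
  | .dia l a => Rinv_mono (KPsem_mono h a)
  | .box l a => RboxOp_mono (KPsem_mono h a)

lemma KPsem_congr {P P' : ℕ × ℕ → Set F.W} :
    ∀ a : MF Λ (ℕ × ℕ), (∀ q ∈ MF.vars a, P q = P' q) → KPsem F P a = KPsem F P' a
  | .var q, h => h q rfl
  | .top, _ => rfl
  | .bot, _ => rfl
  | .and a b, h => by
      simp only [KPsem]
      rw [KPsem_congr a fun q hq => h q (Or.inl hq), KPsem_congr b fun q hq => h q (Or.inr hq)]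
  | .or a b, h => by
      simp only [KPsem]
      rw [KPsem_congr a fun q hq => h q (Or.inl hq), KPsem_congr b fun q hq => h q (Or.inr hq)]
  | .neg _, _ => rfl
  | .imp _ _, _ => rfl
  | .dia l a, h => by simp only [KPsem]; rw [KPsem_congr a h]
  | .box l a, h => by simp only [KPsem]; rw [KPsem_congr a h]

lemma KVsem_mono {P P' : ℕ × ℕ → Set F.W} (h : ∀ q, P q ⊆ P' q) :
    ∀ (φ : MF Λ (ℕ × ℕ)) {X X' : Set F.W}, X ⊆ X' → KVsem F P φ X ⊆ KVsem F P' φ X'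
  | .var _, _, _, hX => hX
  | .imp POS ψ, _, _, hX =>
      KVsem_mono h ψ (Set.inter_subset_inter hX (KPsem_mono h POS))
  | .box l ψ, _, _, hX => KVsem_mono h ψ (Rfwd_mono hX)
  | .top, _, _, _ => subset_rfl
  | .bot, _, _, _ => subset_rfl
  | .and _ _, _, _, _ => subset_rfl
  | .or _ _, _, _, _ => subset_rfl
  | .neg _, _, _, _ => subset_rfl
  | .dia _ _, _, _, _ => subset_rfl

lemma KVsem_congr {r : ℕ × ℕ → ℕ} {P P' : ℕ × ℕ → Set F.W} {φ : MF Λ (ℕ × ℕ)} {p : ℕ × ℕ}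
    (hreg : RegBF r φ p) (h : ∀ q, r q < r p → P q = P' q) :
    ∀ X : Set F.W, KVsem F P φ X = KVsem F P' φ X := by
  induction hreg with
  | var => intro X; rfl
  | imp hPOS hlt _ ih =>
      intro X
      simp only [KVsem]
      rw [KPsem_congr _ (fun q hq => h q (hlt q hq))]
      exact ih h _
  | box l _ ih => intro X; simp only [KVsem]; exact ih h _

lemma sat_pos_iff {θ : ℕ × ℕ → Set F.W} {a : MF Λ (ℕ × ℕ)} (ha : Positive a) :
    ∀ x : F.W, sat F θ x a ↔ x ∈ KPsem F θ a := by
  induction ha with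
  | var p => intro x; simp [sat, KPsem]
  | top => intro x; simp [sat, KPsem]
  | bot => intro x; simp [sat, KPsem]
  | and _ _ ih1 ih2 => intro x; simp [sat, KPsem, ih1, ih2, Set.mem_inter_iff]
  | or _ _ ih1 ih2 => intro x; simp [sat, KPsem, ih1, ih2, Set.mem_union]
  | dia l _ ih => intro x; simp only [sat, KPsem]; exact exists_congr fun y => and_congr_right fun _ => ih y
  | box l _ ih => intro x; simp only [sat, KPsem]; exact forall_congr' fun y => imp_congr_right fun _ => ih y

lemma KV_iff {r : ℕ × ℕ → ℕ} {θ : ℕ × ℕ → Set F.W} {φ : MF Λ (ℕ × ℕ)} {p : ℕ × ℕ}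
    (hreg : RegBF r φ p) :
    ∀ X : Set F.W, (∀ x ∈ X, sat F θ x φ) ↔ KVsem F θ φ X ⊆ θ p := by
  induction hreg with
  | var q => intro X; exact Iff.rfl
  | @imp POS ψ _ hPOS hlt _ ih =>
      intro X
      simp only [KVsem]
      rw [← ih]
      constructor
      · rintro h x ⟨hxX, hxP⟩
        exact h x hxX ((sat_pos_iff hPOS x).2 hxP)
      · intro h x hxX hsat
        exact h x ⟨hxX, (sat_pos_iff hPOS x).1 hsat⟩
  | @box l ψ _ _ ih =>
      intro X
      simp only [KVsem]
      rw [← ih]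
      constructor
      · rintro h y ⟨x, hR, hxX⟩
        exact h x hxX y hR
      · intro h x hxX y hR
        exact h y ⟨x, hR, hxX⟩

lemma den_KPsub {g : ℕ → F.W} (KF : ℕ × ℕ → LExp Λ) :
    ∀ a : MF Λ (ℕ × ℕ), (KPsub KF a).den F g = KPsem F (fun q => (KF q).den F g) a
  | .var q => rfl
  | .top => rfl
  | .bot => rfl
  | .and a b => by simp only [KPsub, LExp.den, KPsem, den_KPsub KF a, den_KPsub KF b]
  | .or a b => by simp only [KPsub, LExp.den, KPsem, den_KPsub KF a, den_KPsub KF b]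
  | .neg _ => rfl
  | .imp _ _ => rfl
  | .dia l a => by simp only [KPsub, LExp.den, KPsem, den_KPsub KF a]
  | .box l a => by simp only [KPsub, LExp.den, KPsem, den_KPsub KF a]

lemma den_KVFsyn {g : ℕ → F.W} (KF : ℕ × ℕ → LExp Λ) :
    ∀ (φ : MF Λ (ℕ × ℕ)) (t : LExp Λ),
      (KVFsyn KF φ t).den F g = KVsem F (fun q => (KF q).den F g) φ (t.den F g)
  | .var _, t => rfl
  | .imp POS ψ, t => by
      simp only [KVFsyn, KVsem, den_KVFsyn KF ψ, LExp.den, den_KPsub]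
  | .box l ψ, t => by
      simp only [KVFsyn, KVsem, den_KVFsyn KF ψ, LExp.den]
  | .top, _ => rfl
  | .bot, _ => rfl
  | .and _ _, _ => rfl
  | .or _ _, _ => rfl
  | .neg _, _ => rfl
  | .dia _ _, _ => rfl

lemma den_unionList {g : ℕ → F.W} :
    ∀ L : List (LExp Λ), (unionList L).den F g = ⋃ e ∈ L, e.den F g
  | [] => by simp [unionList, LExp.den]
  | e :: es => by simp [unionList, LExp.den, den_unionList es]

end Statement5Aux

section Statement5Main

variable {Λ : Type u}

open scoped Classical in
lemma KFsyn_unfold (n : ℕ) (f : ℕ → Finset (MF Λ (ℕ × ℕ))) (k i : ℕ) :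
    KFsyn n f k i = unionList (((List.range n).flatMap fun j =>
      ((f j).toList.filter fun φ => decide (RegBF Prod.fst φ (k, i))).map fun φ =>
        KVFsyn (lowKF n f k) φ (LExp.var j))) := by
  have h : lowKF n f k =
      fun q : ℕ × ℕ => if h : q.1 < k then KFsyn n f q.1 q.2 else LExp.bot := by
    funext q; simp only [lowKF]; split <;> rfl
  rw [h]
  simp only [KFsyn]
  rw [Nat.strongRecOn_eq]

open scoped Classical in
lemma mem_den_KFsyn {F : Frame Λ} (n : ℕ) (f : ℕ → Finset (MF Λ (ℕ × ℕ)))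
    (g : ℕ → F.W) (k i : ℕ) (x : F.W) :
    x ∈ (KFsyn n f k i).den F g ↔
      ∃ j < n, ∃ φ ∈ f j, RegBF Prod.fst φ (k, i) ∧
        x ∈ KVsem F (fun q => (lowKF n f k q).den F g) φ {g j} := by
  rw [KFsyn_unfold, den_unionList]
  simp only [Set.mem_iUnion, List.mem_flatMap, List.mem_map, List.mem_filter,
    List.mem_range, Finset.mem_toList, decide_eq_true_eq]
  constructor
  · rintro ⟨e, ⟨j, hj, φ, ⟨hφ, hreg⟩, rfl⟩, hx⟩
    rw [den_KVFsyn] at hx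
    exact ⟨j, hj, φ, hφ, hreg, hx⟩
  · rintro ⟨j, hj, φ, hφ, hreg, hx⟩
    refine ⟨KVFsyn (lowKF n f k) φ (LExp.var j), ⟨j, hj, φ, ⟨hφ, hreg⟩, rfl⟩, ?_⟩
    rw [den_KVFsyn]
    exact hx

end Statement5Main

/-- minimal valuation: among all valuations `θ` verifying, for every `j`, all
formulas of `f j` at the point `g j`, there is a smallest one `θ_min`, and `θ_min (k, i)`
is the denotation of the `L`-expression `KF_f^{p^k_i}` under the assignment `g`. -/
theorem statement5 {Λ : Type u} (A : Finset (MF Λ (ℕ × ℕ)))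
    (hA : ∀ ψ ∈ A, ∃ p : ℕ × ℕ, RegBF Prod.fst ψ p)
    (n : ℕ) (f : ℕ → Finset (MF Λ (ℕ × ℕ)))
    (hf : ∀ j, f j ⊆ A) (hsupp : ∀ j, n ≤ j → f j = ∅)
    (F : Frame Λ) (g : ℕ → F.W)
    (θmin : ℕ × ℕ → Set F.W)
    (hθmin : θmin = fun p => (KFsyn n f p.1 p.2).den F g) :
    (∀ j < n, ∀ φ ∈ f j, sat F θmin (g j) φ) ∧
      ∀ θ : ℕ × ℕ → Set F.W,
        (∀ j < n, ∀ φ ∈ f j, sat F θ (g j) φ) → ∀ p, θmin p ⊆ θ p := by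
  subst hθmin
  have hlow : ∀ (k : ℕ) (q : ℕ × ℕ), q.1 < k →
      (lowKF n f k q).den F g = (KFsyn n f q.1 q.2).den F g := by
    intro k q hq
    simp only [lowKF, if_pos hq]
  have hlow0 : ∀ (k : ℕ) (q : ℕ × ℕ), ¬ q.1 < k → (lowKF n f k q).den F g = ∅ := by
    intro k q hq
    simp only [lowKF, if_neg hq]; rfl
  have hmin : ∀ θ : ℕ × ℕ → Set F.W,
      (∀ j < n, ∀ φ ∈ f j, sat F θ (g j) φ) →
      ∀ k i, (KFsyn n f k i).den F g ⊆ θ (k, i) := by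
    intro θ hθ k
    induction k using Nat.strong_induction_on with
    | _ k ih =>
      intro i x hx
      rw [mem_den_KFsyn] at hx
      obtain ⟨j, hj, φ, hφ, hreg, hxv⟩ := hx
      have hPsub : ∀ q : ℕ × ℕ, (lowKF n f k q).den F g ⊆ θ q := by
        intro q
        by_cases h : q.1 < k
        · rw [hlow k q h]
          have := ih q.1 h q.2
          simpa using this
        · rw [hlow0 k q h]
          exact Set.empty_subset _
      have hxv' : x ∈ KVsem F θ φ {g j} := KVsem_mono hPsub φ subset_rfl hxv
      have hsat : ∀ y ∈ ({g j} : Set F.W), sat F θ y φ := by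
        rintro y rfl
        exact hθ j hj φ hφ
      exact (KV_iff hreg {g j}).1 hsat hxv'
  constructor
  · intro j hj φ hφ
    obtain ⟨p, hreg⟩ := hA φ (hf j hφ)
    set θm : ℕ × ℕ → Set F.W := fun q => (KFsyn n f q.1 q.2).den F g with hθm
    have hcongr : KVsem F θm φ {g j} =
        KVsem F (fun q => (lowKF n f p.1 q).den F g) φ {g j} := by
      refine KVsem_congr hreg (fun q hq => ?_) _
      exact (hlow p.1 q hq).symm
    have hsub : KVsem F θm φ {g j} ⊆ θm p := by
      rw [hcongr]
      intro x hx
      show x ∈ (KFsyn n f p.1 p.2).den F g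
      rw [mem_den_KFsyn]
      exact ⟨j, hj, φ, hφ, by simpa using hreg, hx⟩
    exact (KV_iff hreg {g j}).2 hsub (g j) rfl
  · intro θ hθ p
    exact hmin θ hθ p.1 p.2
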